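/- Let Q₁ ∈ W₁ and Q₂ ∈ W₂ be such that L(Q₁)·Q₂ = Q₂·L(Q₁) (i.e., Q₂ is a critical point of F(Q₁,·) restricted to W₂) and F(Q₁,Q₂) ≥ 0. Then there exists a real 3×3 antisymmetric matrix A such that the function g(t) = F(Q₁, exp(tA)·Q₂·exp(tA)ᵀ) satisfies g″(0) < 0; in particular the Hessian of F(Q₁,·) on W₂ at Q₂ has at least one negative eigenvalue. -/

import Mathlib

noncomputable section
open Matrix

abbrev M3 := Matrix (Fin 3) (Fin 3) ℝ

/-- The group `SO(3)` of real 3×3 orthogonal matrices with determinant 1. -/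
def SO3 : Set M3 := {U | Uᵀ * U = 1 ∧ U.det = 1}

/-- The matrix of the orthogonal projection of `ℝ³` onto the span of `e₁`. -/
def P : M3 := Matrix.single 0 0 1

/-- `L(Q) = 35 p Q p − 10 p Q − 10 Q p + 2 Q`. -/
def L (Q : M3) : M3 :=
  (35 : ℝ) • (P * Q * P) - (10 : ℝ) • (P * Q) - (10 : ℝ) • (Q * P) + (2 : ℝ) • Q

/-- The quadrupole-quadrupole interaction `F(Q₁,Q₂) = tr (L(Q₁) Q₂)`. -/
def F (Q₁ Q₂ : M3) : ℝ := (L Q₁ * Q₂).trace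

/-- The rotation orbit `W(Q⁰) = {Uᵀ Q⁰ U : U ∈ SO(3)}` of a matrix `Q⁰`. -/
def W (Q0 : M3) : Set M3 := {Q | ∃ U ∈ SO3, Q = Uᵀ * Q0 * U}

/- ### Auxiliary material -/

section Aux

attribute [local instance] Matrix.linftyOpNormedRing Matrix.linftyOpNormedAlgebra

lemma hasDerivAt_conj (B Q A : M3) (t : ℝ) :
    HasDerivAt (fun t : ℝ =>
        (B * (NormedSpace.exp (t • A) * Q * NormedSpace.exp (t • (-A)))).trace)
      ((B * (NormedSpace.exp (t • A) * (A * Q - Q * A) * NormedSpace.exp (t • (-A)))).trace)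
      t := by
  have h1 := hasDerivAt_exp_smul_const (𝕂 := ℝ) A t
  have h2 := hasDerivAt_exp_smul_const (𝕂 := ℝ) (-A) t
  have h3 := (h1.mul_const Q).mul h2
  have hc : Commute (-A) (NormedSpace.exp (t • (-A))) :=
    ((Commute.refl (-A)).smul_right t).exp_right
  have h4 : HasDerivAt (fun t : ℝ =>
      NormedSpace.exp (t • A) * Q * NormedSpace.exp (t • (-A)))
      (NormedSpace.exp (t • A) * (A * Q - Q * A) * NormedSpace.exp (t • (-A))) t := by
    refine h3.congr_deriv ?_
    erw [← hc.eq]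
    noncomm_ring
  have h5 := h4.const_mul B
  exact (LinearMap.toContinuousLinearMap
    (Matrix.traceLinearMap (Fin 3) ℝ ℝ)).hasFDerivAt.comp_hasDerivAt t h5

lemma deriv2 (B Q A : M3) :
    deriv (deriv (fun t : ℝ =>
        (B * (NormedSpace.exp (t • A) * Q * NormedSpace.exp (t • (-A)))).trace)) 0
      = (B * (A * (A * Q - Q * A) - (A * Q - Q * A) * A)).trace := by
  have hd : deriv (fun t : ℝ =>
      (B * (NormedSpace.exp (t • A) * Q * NormedSpace.exp (t • (-A)))).trace)
      = fun t : ℝ =>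
        (B * (NormedSpace.exp (t • A) * (A * Q - Q * A) * NormedSpace.exp (t • (-A)))).trace :=
    funext fun t => (hasDerivAt_conj B Q A t).deriv
  rw [hd]
  have h := (hasDerivAt_conj B (A * Q - Q * A) A 0).deriv
  simpa [NormedSpace.exp_zero] using h

/- concrete antisymmetric directions -/

def A01 : M3 := !![0,1,0; -1,0,0; 0,0,0]
def A02 : M3 := !![0,0,1; 0,0,0; -1,0,0]
def A12 : M3 := !![0,0,0; 0,0,1; 0,-1,0]
def Ac2 (e : ℝ) : M3 := !![0,0,1; 0,0,e; -1,-e,0]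
def Ac1 (e : ℝ) : M3 := !![0,1,0; -1,0,-e; 0,e,0]
def Ac0 (e : ℝ) : M3 := !![0,-1,-e; 1,0,0; e,0,0]

lemma skewA01 : A01ᵀ = -A01 := by
  ext i j; fin_cases i <;> fin_cases j <;> simp [A01, Matrix.vecHead, Matrix.vecTail]
lemma skewA02 : A02ᵀ = -A02 := by
  ext i j; fin_cases i <;> fin_cases j <;> simp [A02, Matrix.vecHead, Matrix.vecTail]
lemma skewA12 : A12ᵀ = -A12 := by
  ext i j; fin_cases i <;> fin_cases j <;> simp [A12, Matrix.vecHead, Matrix.vecTail]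
lemma skewAc2 (e : ℝ) : (Ac2 e)ᵀ = -(Ac2 e) := by
  ext i j; fin_cases i <;> fin_cases j <;> simp [Ac2, Matrix.vecHead, Matrix.vecTail]
lemma skewAc1 (e : ℝ) : (Ac1 e)ᵀ = -(Ac1 e) := by
  ext i j; fin_cases i <;> fin_cases j <;> simp [Ac1, Matrix.vecHead, Matrix.vecTail]
lemma skewAc0 (e : ℝ) : (Ac0 e)ᵀ = -(Ac0 e) := by
  ext i j; fin_cases i <;> fin_cases j <;> simp [Ac0, Matrix.vecHead, Matrix.vecTail]

lemma diag_eta (d : Fin 3 → ℝ) : (diagonal d : M3) = !![d 0,0,0; 0,d 1,0; 0,0,d 2] := by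
  ext i j
  fin_cases i <;> fin_cases j <;> simp [diagonal, Matrix.vecHead, Matrix.vecTail]

lemma H01 (B : M3) (d : Fin 3 → ℝ) :
    (B * (A01 * (A01 * diagonal d - diagonal d * A01)
      - (A01 * diagonal d - diagonal d * A01) * A01)).trace
      = -2 * ((d 0 - d 1) * (B 0 0 - B 1 1)) := by
  rw [diag_eta, Matrix.eta_fin_three B]
  simp [A01, Matrix.trace_fin_three, Matrix.mul_fin_three, Matrix.vecHead, Matrix.vecTail]
  ring

lemma H02 (B : M3) (d : Fin 3 → ℝ) :
    (B * (A02 * (A02 * diagonal d - diagonal d * A02)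
      - (A02 * diagonal d - diagonal d * A02) * A02)).trace
      = -2 * ((d 0 - d 2) * (B 0 0 - B 2 2)) := by
  rw [diag_eta, Matrix.eta_fin_three B]
  simp [A02, Matrix.trace_fin_three, Matrix.mul_fin_three, Matrix.vecHead, Matrix.vecTail]
  ring

lemma H12 (B : M3) (d : Fin 3 → ℝ) :
    (B * (A12 * (A12 * diagonal d - diagonal d * A12)
      - (A12 * diagonal d - diagonal d * A12) * A12)).trace
      = -2 * ((d 1 - d 2) * (B 1 1 - B 2 2)) := by
  rw [diag_eta, Matrix.eta_fin_three B]
  simp [A12, Matrix.trace_fin_three, Matrix.mul_fin_three, Matrix.vecHead, Matrix.vecTail]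
  ring

lemma Hd2 (B : M3) (d : Fin 3 → ℝ) (e : ℝ) (hd : d 1 = d 0)
    (hb1 : B 1 1 = B 0 0) (hb2 : B 2 2 = B 0 0) (hbs : B 1 0 = B 0 1) :
    (B * (Ac2 e * (Ac2 e * diagonal d - diagonal d * Ac2 e)
      - (Ac2 e * diagonal d - diagonal d * Ac2 e) * Ac2 e)).trace
      = -4 * e * B 0 1 * (d 0 - d 2) := by
  rw [diag_eta, Matrix.eta_fin_three B]
  simp [Ac2, Matrix.trace_fin_three, Matrix.mul_fin_three, Matrix.vecHead, Matrix.vecTail]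
  rw [hd, hb1, hb2, hbs]
  ring

lemma Hd1 (B : M3) (d : Fin 3 → ℝ) (e : ℝ) (hd : d 2 = d 0)
    (hb1 : B 1 1 = B 0 0) (hb2 : B 2 2 = B 0 0) (hbs : B 2 0 = B 0 2) :
    (B * (Ac1 e * (Ac1 e * diagonal d - diagonal d * Ac1 e)
      - (Ac1 e * diagonal d - diagonal d * Ac1 e) * Ac1 e)).trace
      = -4 * e * B 0 2 * (d 0 - d 1) := by
  rw [diag_eta, Matrix.eta_fin_three B]
  simp [Ac1, Matrix.trace_fin_three, Matrix.mul_fin_three, Matrix.vecHead, Matrix.vecTail]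
  rw [hd, hb1, hb2, hbs]
  ring

lemma Hd0 (B : M3) (d : Fin 3 → ℝ) (e : ℝ) (hd : d 2 = d 1)
    (hb1 : B 1 1 = B 0 0) (hb2 : B 2 2 = B 0 0) (hbs : B 2 1 = B 1 2) :
    (B * (Ac0 e * (Ac0 e * diagonal d - diagonal d * Ac0 e)
      - (Ac0 e * diagonal d - diagonal d * Ac0 e) * Ac0 e)).trace
      = -4 * e * B 1 2 * (d 1 - d 0) := by
  rw [diag_eta, Matrix.eta_fin_three B]
  simp [Ac0, Matrix.trace_fin_three, Matrix.mul_fin_three, Matrix.vecHead, Matrix.vecTail]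
  rw [hd, hb1, hb2, hbs]
  ring

lemma L_entries (Q : M3) : L Q =
    !![17*Q 0 0, -8*Q 0 1, -8*Q 0 2;
       -8*Q 1 0, 2*Q 1 1, 2*Q 1 2;
       -8*Q 2 0, 2*Q 2 1, 2*Q 2 2] := by
  ext i j
  fin_cases i <;> fin_cases j <;>
    simp [L, P, Matrix.mul_apply, Fin.sum_univ_three,
      Matrix.single_apply, Matrix.vecHead, Matrix.vecTail] <;> ring

lemma L_symm (Q : M3) (h : Qᵀ = Q) : (L Q)ᵀ = L Q := by
  rw [L_entries]
  have hs : ∀ i j, Q j i = Q i j := fun i j => by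
    rw [show Q j i = Qᵀ i j from rfl, h]
  ext i j
  fin_cases i <;> fin_cases j <;>
    simp [Matrix.vecHead, Matrix.vecTail] <;> rw [hs] <;> ring

lemma L_scalar (Q : M3) (ht : Q.trace = 0) (b : ℝ) (h : L Q = b • (1 : M3)) : Q = 0 := by
  rw [L_entries] at h
  have hf : ∀ i j, (!![17*Q 0 0, -8*Q 0 1, -8*Q 0 2;
       -8*Q 1 0, 2*Q 1 1, 2*Q 1 2;
       -8*Q 2 0, 2*Q 2 1, 2*Q 2 2] : M3) i j = (b • (1 : M3)) i j :=
    fun i j => by rw [h]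
  have h00 := hf 0 0
  have h01 := hf 0 1
  have h02 := hf 0 2
  have h10 := hf 1 0
  have h11 := hf 1 1
  have h12 := hf 1 2
  have h20 := hf 2 0
  have h21 := hf 2 1
  have h22 := hf 2 2
  simp [Matrix.one_apply] at h00 h01 h02 h10 h11 h12 h20 h21 h22
  rw [Matrix.trace_fin_three] at ht
  ext i j
  fin_cases i <;> fin_cases j <;> simp <;> linarith

lemma conj_bracket (Wm A' D : M3) (hW1 : Wmᵀ * Wm = 1) :
    (Wm * A' * Wmᵀ) * ((Wm * A' * Wmᵀ) * (Wm * D * Wmᵀ) - (Wm * D * Wmᵀ) * (Wm * A' * Wmᵀ))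
      - ((Wm * A' * Wmᵀ) * (Wm * D * Wmᵀ) - (Wm * D * Wmᵀ) * (Wm * A' * Wmᵀ)) * (Wm * A' * Wmᵀ)
      = Wm * (A' * (A' * D - D * A') - (A' * D - D * A') * A') * Wmᵀ := by
  have hcol : ∀ X : M3, Wmᵀ * (Wm * X) = X := fun X => by
    rw [← Matrix.mul_assoc, hW1, Matrix.one_mul]
  simp only [Matrix.mul_sub, Matrix.sub_mul, Matrix.mul_assoc, hcol]

/-- The key algebraic lemma: in a frame where the second quadrupole is diagonal. -/
lemma exists_neg_dir (Bp : M3) (d : Fin 3 → ℝ)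
    (hsym : Bpᵀ = Bp)
    (hcm : Bp * diagonal d = diagonal d * Bp)
    (hsum : d 0 + d 1 + d 2 = 0)
    (hne : ¬(d 0 = d 1 ∧ d 1 = d 2))
    (hF : 0 ≤ Bp 0 0 * d 0 + Bp 1 1 * d 1 + Bp 2 2 * d 2)
    (hns : ∀ b : ℝ, Bp ≠ b • (1 : M3)) :
    ∃ A : M3, Aᵀ = -A ∧
      (Bp * (A * (A * diagonal d - diagonal d * A)
        - (A * diagonal d - diagonal d * A) * A)).trace < 0 := by
  have hsym' : ∀ i j, Bp j i = Bp i j := fun i j => by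
    rw [show Bp j i = Bpᵀ i j from rfl, hsym]
  have hcm' : ∀ i j, Bp i j * d j = d i * Bp i j := fun i j => by
    have h := congrFun (congrFun hcm i) j
    simpa [Matrix.mul_diagonal, Matrix.diagonal_mul] using h
  have hoff : ∀ i j, d i ≠ d j → Bp i j = 0 := by
    intro i j hdd
    have h2 : Bp i j * (d j - d i) = 0 := by linear_combination hcm' i j
    rcases mul_eq_zero.mp h2 with h | h
    · exact h
    · exact absurd (by linarith : d i = d j) hdd
  rcases lt_or_ge 0 ((d 0 - d 1) * (Bp 0 0 - Bp 1 1)) with h01 | h01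
  · exact ⟨A01, skewA01, by rw [H01]; nlinarith⟩
  rcases lt_or_ge 0 ((d 0 - d 2) * (Bp 0 0 - Bp 2 2)) with h02 | h02
  · exact ⟨A02, skewA02, by rw [H02]; nlinarith⟩
  rcases lt_or_ge 0 ((d 1 - d 2) * (Bp 1 1 - Bp 2 2)) with h12 | h12
  · exact ⟨A12, skewA12, by rw [H12]; nlinarith⟩
  -- degenerate situation: all pair products vanish
  have hsum3 : (d 0 - d 1) * (Bp 0 0 - Bp 1 1) + (d 0 - d 2) * (Bp 0 0 - Bp 2 2)
      + (d 1 - d 2) * (Bp 1 1 - Bp 2 2)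
      = 3 * (Bp 0 0 * d 0 + Bp 1 1 * d 1 + Bp 2 2 * d 2)
        - (Bp 0 0 + Bp 1 1 + Bp 2 2) * (d 0 + d 1 + d 2) := by ring
  rw [hsum, mul_zero, sub_zero] at hsum3
  have hz01 : (d 0 - d 1) * (Bp 0 0 - Bp 1 1) = 0 := by nlinarith
  have hz02 : (d 0 - d 2) * (Bp 0 0 - Bp 2 2) = 0 := by nlinarith
  have hz12 : (d 1 - d 2) * (Bp 1 1 - Bp 2 2) = 0 := by nlinarith
  have hbz : ∀ i j : Fin 3, d i ≠ d j →
      (d i - d j) * (Bp i i - Bp j j) = 0 → Bp i i = Bp j j := by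
    intro i j hij hz
    rcases mul_eq_zero.mp hz with h | h
    · exact absurd (by linarith : d i = d j) hij
    · linarith
  by_cases e01 : d 0 = d 1
  · -- d 0 = d 1 ≠ d 2
    have e02 : d 0 ≠ d 2 := fun h => hne ⟨e01, by rw [← e01, ← h]⟩
    have e12 : d 1 ≠ d 2 := by rw [← e01]; exact e02
    have hb02 : Bp 0 0 = Bp 2 2 := hbz 0 2 e02 hz02
    have hb12 : Bp 1 1 = Bp 2 2 := hbz 1 2 e12 hz12
    by_cases hs0 : Bp 0 1 = 0
    · exfalso
      apply hns (Bp 0 0)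
      ext i j
      fin_cases i <;> fin_cases j <;>
        simp [Matrix.one_apply] <;>
        first
          | rfl
          | linarith
          | (first
              | exact hs0
              | (rw [hsym' 0 1]; exact hs0)
              | exact hoff 0 2 e02
              | (rw [hsym' 0 2]; exact hoff 0 2 e02)
              | exact hoff 1 2 e12
              | (rw [hsym' 1 2]; exact hoff 1 2 e12))
    · have hb10 : Bp 1 1 = Bp 0 0 := by linarith
      rcases lt_or_ge 0 (Bp 0 1 * (d 0 - d 2)) with hp | hp
      · exact ⟨Ac2 1, skewAc2 1, by
          rw [Hd2 Bp d 1 e01.symm hb10 hb02.symm (hsym' 0 1)]; nlinarith⟩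
      · have hlt : Bp 0 1 * (d 0 - d 2) < 0 :=
          hp.lt_of_ne (mul_ne_zero hs0 (sub_ne_zero.mpr e02))
        exact ⟨Ac2 (-1), skewAc2 (-1), by
          rw [Hd2 Bp d (-1) e01.symm hb10 hb02.symm (hsym' 0 1)]; nlinarith⟩
  by_cases e02 : d 0 = d 2
  · -- d 0 = d 2 ≠ d 1
    have e12 : d 1 ≠ d 2 := fun h => e01 (by rw [h, ← e02])
    have hb01 : Bp 0 0 = Bp 1 1 := hbz 0 1 e01 hz01
    have hb12 : Bp 1 1 = Bp 2 2 := hbz 1 2 e12 hz12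
    by_cases hs0 : Bp 0 2 = 0
    · exfalso
      apply hns (Bp 0 0)
      ext i j
      fin_cases i <;> fin_cases j <;>
        simp [Matrix.one_apply] <;>
        first
          | rfl
          | linarith
          | (first
              | exact hs0
              | (rw [hsym' 0 2]; exact hs0)
              | exact hoff 0 1 e01
              | (rw [hsym' 0 1]; exact hoff 0 1 e01)
              | exact hoff 1 2 e12
              | (rw [hsym' 1 2]; exact hoff 1 2 e12))
    · have hb10 : Bp 1 1 = Bp 0 0 := by linarith
      have hb20 : Bp 2 2 = Bp 0 0 := by linarith
      have e01' : d 0 ≠ d 1 := e01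
      rcases lt_or_ge 0 (Bp 0 2 * (d 0 - d 1)) with hp | hp
      · exact ⟨Ac1 1, skewAc1 1, by
          rw [Hd1 Bp d 1 e02.symm hb10 hb20 (hsym' 0 2)]; nlinarith⟩
      · have hlt : Bp 0 2 * (d 0 - d 1) < 0 :=
          hp.lt_of_ne (mul_ne_zero hs0 (sub_ne_zero.mpr e01'))
        exact ⟨Ac1 (-1), skewAc1 (-1), by
          rw [Hd1 Bp d (-1) e02.symm hb10 hb20 (hsym' 0 2)]; nlinarith⟩
  by_cases e12 : d 1 = d 2
  · -- d 1 = d 2 ≠ d 0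
    have hb01 : Bp 0 0 = Bp 1 1 := hbz 0 1 e01 hz01
    have hb02 : Bp 0 0 = Bp 2 2 := hbz 0 2 e02 hz02
    by_cases hs0 : Bp 1 2 = 0
    · exfalso
      apply hns (Bp 0 0)
      ext i j
      fin_cases i <;> fin_cases j <;>
        simp [Matrix.one_apply] <;>
        first
          | rfl
          | linarith
          | (first
              | exact hs0
              | (rw [hsym' 1 2]; exact hs0)
              | exact hoff 0 1 e01
              | (rw [hsym' 0 1]; exact hoff 0 1 e01)
              | exact hoff 0 2 e02
              | (rw [hsym' 0 2]; exact hoff 0 2 e02))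
    · have hb10 : Bp 1 1 = Bp 0 0 := by linarith
      have hb20 : Bp 2 2 = Bp 0 0 := by linarith
      have e10 : d 1 ≠ d 0 := fun h => e01 h.symm
      rcases lt_or_ge 0 (Bp 1 2 * (d 1 - d 0)) with hp | hp
      · exact ⟨Ac0 1, skewAc0 1, by
          rw [Hd0 Bp d 1 e12.symm hb10 hb20 (hsym' 1 2)]; nlinarith⟩
      · have hlt : Bp 1 2 * (d 1 - d 0) < 0 :=
          hp.lt_of_ne (mul_ne_zero hs0 (sub_ne_zero.mpr e10))
        exact ⟨Ac0 (-1), skewAc0 (-1), by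
          rw [Hd0 Bp d (-1) e12.symm hb10 hb20 (hsym' 1 2)]; nlinarith⟩
  · -- all eigenvalues distinct: Bp must be scalar, contradiction
    exfalso
    have hb01 : Bp 0 0 = Bp 1 1 := hbz 0 1 e01 hz01
    have hb02 : Bp 0 0 = Bp 2 2 := hbz 0 2 e02 hz02
    apply hns (Bp 0 0)
    ext i j
    fin_cases i <;> fin_cases j <;>
      simp [Matrix.one_apply] <;>
      first
        | rfl
        | linarith
        | (first
            | exact hoff 0 1 e01
            | (rw [hsym' 0 1]; exact hoff 0 1 e01)
            | exact hoff 0 2 e02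
            | (rw [hsym' 0 2]; exact hoff 0 2 e02)
            | exact hoff 1 2 e12
            | (rw [hsym' 1 2]; exact hoff 1 2 e12))

end Aux

/-- If `Q₂ ∈ W₂` is a critical point of `F(Q₁,·)` on `W₂` (i.e. `Q₂` commutes with `L(Q₁)`)
with `F(Q₁,Q₂) ≥ 0`, then there is an antisymmetric direction `A` in which the second
derivative of `t ↦ F(Q₁, exp(tA) Q₂ exp(tA)ᵀ)` at `t = 0` is negative; in particular the
Hessian of `F(Q₁,·)` on `W₂` at `Q₂` has a negative eigenvalue. -/
theorem stmt14 (Q10 Q20 : M3) (h1s : Q10ᵀ = Q10) (h2s : Q20ᵀ = Q20)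
    (h1t : Q10.trace = 0) (h2t : Q20.trace = 0) (h1n : Q10 ≠ 0) (h2n : Q20 ≠ 0)
    (Q₁ : M3) (hQ₁ : Q₁ ∈ W Q10) (Q₂ : M3) (hQ₂ : Q₂ ∈ W Q20)
    (hcomm : L Q₁ * Q₂ = Q₂ * L Q₁) (hF : 0 ≤ F Q₁ Q₂) :
    ∃ A : M3, Aᵀ = -A ∧
      deriv (deriv (fun t : ℝ =>
        F Q₁ (NormedSpace.exp (t • A) * Q₂ * (NormedSpace.exp (t • A))ᵀ))) 0 < 0 := by
  obtain ⟨V1, hV1m, hQ1e⟩ := hQ₁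
  obtain ⟨V2, hV2m, hQ2e⟩ := hQ₂
  have hV1 : V1ᵀ * V1 = 1 := hV1m.1
  have hV2 : V2ᵀ * V2 = 1 := hV2m.1
  have hV1' : V1 * V1ᵀ = 1 := mul_eq_one_comm.mp hV1
  have hV2' : V2 * V2ᵀ = 1 := mul_eq_one_comm.mp hV2
  -- basic facts about Q₁ and Q₂
  have hQ1s : Q₁ᵀ = Q₁ := by
    rw [hQ1e]
    rw [Matrix.transpose_mul, Matrix.transpose_mul, Matrix.transpose_transpose, h1s,
      Matrix.mul_assoc]
  have hQ2s : Q₂ᵀ = Q₂ := by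
    rw [hQ2e]
    rw [Matrix.transpose_mul, Matrix.transpose_mul, Matrix.transpose_transpose, h2s,
      Matrix.mul_assoc]
  have hQ1t : Q₁.trace = 0 := by
    rw [hQ1e, Matrix.trace_mul_cycle, hV1', Matrix.one_mul, h1t]
  have hQ2t : Q₂.trace = 0 := by
    rw [hQ2e, Matrix.trace_mul_cycle, hV2', Matrix.one_mul, h2t]
  have hQ1n : Q₁ ≠ 0 := by
    intro h
    apply h1n
    have : V1 * (V1ᵀ * Q10 * V1) * V1ᵀ = Q10 := by
      rw [← Matrix.mul_assoc, ← Matrix.mul_assoc, hV1', Matrix.one_mul, Matrix.mul_assoc, hV1',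
        Matrix.mul_one]
    rw [← this, ← hQ1e, h, Matrix.mul_zero, Matrix.zero_mul]
  have hQ2n : Q₂ ≠ 0 := by
    intro h
    apply h2n
    have : V2 * (V2ᵀ * Q20 * V2) * V2ᵀ = Q20 := by
      rw [← Matrix.mul_assoc, ← Matrix.mul_assoc, hV2', Matrix.one_mul, Matrix.mul_assoc, hV2',
        Matrix.mul_one]
    rw [← this, ← hQ2e, h, Matrix.mul_zero, Matrix.zero_mul]
  -- diagonalize Q₂
  have hherm : Q₂.IsHermitian := by
    rw [Matrix.IsHermitian, conjTranspose]
    simpa [Matrix.map, Matrix.transpose] using hQ2s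
  obtain ⟨d, Wm, hW1, hW2, hQ2d⟩ :
      ∃ (d : Fin 3 → ℝ) (Wm : M3), Wmᵀ * Wm = 1 ∧ Wm * Wmᵀ = 1 ∧
        Q₂ = Wm * diagonal d * Wmᵀ := by
    refine ⟨hherm.eigenvalues, (hherm.eigenvectorUnitary : M3), ?_, ?_, ?_⟩
    · have h := (Matrix.mem_unitaryGroup_iff'.mp (hherm.eigenvectorUnitary).2)
      simpa [Matrix.star_eq_conjTranspose, conjTranspose, Matrix.map, Matrix.transpose] using h
    · have h := (Matrix.mem_unitaryGroup_iff.mp (hherm.eigenvectorUnitary).2)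
      simpa [Matrix.star_eq_conjTranspose, conjTranspose, Matrix.map, Matrix.transpose] using h
    · have h := hherm.spectral_theorem
      simpa [Matrix.star_eq_conjTranspose, conjTranspose, Matrix.map, Matrix.transpose] using h
  have hcol1 : ∀ X : M3, Wmᵀ * (Wm * X) = X := fun X => by
    rw [← Matrix.mul_assoc, hW1, Matrix.one_mul]
  have hcol2 : ∀ X : M3, Wm * (Wmᵀ * X) = X := fun X => by
    rw [← Matrix.mul_assoc, hW2, Matrix.one_mul]
  -- transported L Q₁
  have hBs : (L Q₁)ᵀ = L Q₁ := L_symm Q₁ hQ1s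
  have htr : ∀ X : M3, ((Wmᵀ * (L Q₁) * Wm) * X).trace = ((L Q₁) * (Wm * X * Wmᵀ)).trace := by
    intro X
    have h1 : ((Wmᵀ * (L Q₁) * Wm) * X).trace = (Wmᵀ * ((L Q₁) * Wm * X)).trace := by
      simp only [Matrix.mul_assoc]
    rw [h1, Matrix.trace_mul_comm]
    simp only [Matrix.mul_assoc]
  have hDQ : diagonal d = Wmᵀ * Q₂ * Wm := by
    rw [hQ2d]
    simp only [Matrix.mul_assoc, hcol1, hcol2, hW1, hW2, Matrix.mul_one]
  have hBpD : (Wmᵀ * (L Q₁) * Wm) * diagonal d = diagonal d * (Wmᵀ * (L Q₁) * Wm) := by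
    rw [hDQ]
    simp only [Matrix.mul_assoc, hcol2]
    rw [show (L Q₁) * (Q₂ * Wm) = Q₂ * ((L Q₁) * Wm) by
      rw [← Matrix.mul_assoc, hcomm, Matrix.mul_assoc]]
  have hBps : (Wmᵀ * (L Q₁) * Wm)ᵀ = Wmᵀ * (L Q₁) * Wm := by
    rw [Matrix.transpose_mul, Matrix.transpose_mul, Matrix.transpose_transpose, hBs,
      Matrix.mul_assoc]
  have hdsum : d 0 + d 1 + d 2 = 0 := by
    have h : Q₂.trace = (diagonal d : M3).trace := by
      rw [hQ2d, Matrix.trace_mul_cycle, hW1, Matrix.one_mul]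
    rw [hQ2t] at h
    simpa [Matrix.trace_fin_three, Matrix.diagonal] using h.symm
  have hdne : ¬(d 0 = d 1 ∧ d 1 = d 2) := by
    rintro ⟨ha, hb⟩
    apply hQ2n
    have hdz : diagonal d = (0 : M3) := by
      rw [diag_eta]
      ext i j
      fin_cases i <;> fin_cases j <;>
        simp [Matrix.vecHead, Matrix.vecTail] <;> linarith
    rw [hQ2d, hdz, Matrix.mul_zero, Matrix.zero_mul]
  have hFval : 0 ≤ (Wmᵀ * (L Q₁) * Wm) 0 0 * d 0 + (Wmᵀ * (L Q₁) * Wm) 1 1 * d 1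
      + (Wmᵀ * (L Q₁) * Wm) 2 2 * d 2 := by
    have h1 : ((Wmᵀ * (L Q₁) * Wm) * diagonal d).trace = F Q₁ Q₂ := by
      rw [htr, ← hQ2d, F]
    have h2 : ((Wmᵀ * (L Q₁) * Wm) * diagonal d).trace
        = (Wmᵀ * (L Q₁) * Wm) 0 0 * d 0 + (Wmᵀ * (L Q₁) * Wm) 1 1 * d 1
          + (Wmᵀ * (L Q₁) * Wm) 2 2 * d 2 := by
      simp [Matrix.trace_fin_three, Matrix.mul_diagonal]
    rw [← h2, h1]
    exact hF
  have hns : ∀ b : ℝ, (Wmᵀ * (L Q₁) * Wm) ≠ b • (1 : M3) := by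
    intro b hb
    apply hQ1n
    apply L_scalar Q₁ hQ1t b
    have : Wm * (Wmᵀ * (L Q₁) * Wm) * Wmᵀ = L Q₁ := by
      rw [← Matrix.mul_assoc, ← Matrix.mul_assoc, hW2, Matrix.one_mul, Matrix.mul_assoc, hW2,
        Matrix.mul_one]
    rw [← this, hb]
    rw [Matrix.mul_smul, Matrix.smul_mul, Matrix.mul_one, hW2]
  obtain ⟨A', hA's, hA'lt⟩ := exists_neg_dir (Wmᵀ * (L Q₁) * Wm) d hBps hBpD hdsum hdne hFval hns
  have hskew : (Wm * A' * Wmᵀ)ᵀ = -(Wm * A' * Wmᵀ) := by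
    rw [Matrix.transpose_mul, Matrix.transpose_mul, Matrix.transpose_transpose, hA's]
    simp only [Matrix.neg_mul, Matrix.mul_neg, Matrix.mul_assoc]
  refine ⟨Wm * A' * Wmᵀ, hskew, ?_⟩
  · have hfun : (fun t : ℝ =>
        F Q₁ (NormedSpace.exp (t • (Wm * A' * Wmᵀ)) * Q₂
          * (NormedSpace.exp (t • (Wm * A' * Wmᵀ)))ᵀ))
        = fun t : ℝ =>
          ((L Q₁) * (NormedSpace.exp (t • (Wm * A' * Wmᵀ)) * Q₂
            * NormedSpace.exp (t • (-(Wm * A' * Wmᵀ))))).trace := by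
      funext t
      have hte : (NormedSpace.exp (t • (Wm * A' * Wmᵀ)))ᵀ
          = NormedSpace.exp (t • (-(Wm * A' * Wmᵀ))) := by
        rw [← Matrix.exp_transpose, Matrix.transpose_smul, hskew]
      rw [F, hte]
    rw [hfun, deriv2]
    rw [hQ2d, conj_bracket Wm A' (diagonal d) hW1, ← htr]
    exact hA'lt
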